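/- arXiv:2004.14729 — 3 statements merged into one kernel-verified Lean document; each statement's English description precedes it below -/
import Mathlib

section
/- Let s ≥ 2, L > 0, A(r) = (1+s/2)^{-1} r^{1+s/2}, and let γ̃ : [0,1] → ℝ be a piecewise C¹ curve with γ̃(0) = L/2 and γ̃(1) = x₁ ≤ 0. Then 2A(L/2) − A(|L/2 + x₁|) ≤ ∫₀¹ min(|γ̃(t) − L/2|, |γ̃(t) + L/2|)^{s/2} |γ̃'(t)| dt. -/
/-!
Write `W(y) = min(|y - L/2|, |y + L/2|)^{s/2}`. Substituting `y = γ(t)` on each C¹ piece of `γ`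
gives `∫₀¹ W(γ) γ' = ∫_{L/2}^{x₁} W`, so the weighted length of `γ` dominates `∫_{x₁}^{L/2} W`.
Since `W` is even and equals `(y + L/2)^{s/2}` on `[-L/2, 0]`, cutting this integral at
`max(x₁, -L/2)` shows that it is at least `2A(L/2) - A(|L/2 + x₁|)`.
-/

open Set

/-- A curve `γ : ℝ → ℝ` is piecewise C¹ on `[0,1]`. -/
def PiecewiseC1R (γ : ℝ → ℝ) : Prop :=
  ContinuousOn γ (Icc 0 1) ∧
  ∃ (n : ℕ) (t : Fin (n + 1) → ℝ), StrictMono t ∧ t 0 = 0 ∧ t (Fin.last n) = 1 ∧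
    ∀ i : Fin n, ContDiffOn ℝ 1 γ (Icc (t i.castSucc) (t i.succ))

open MeasureTheory intervalIntegral

section ChangeOfVariables

variable {γ g : ℝ → ℝ} {a b : ℝ}

theorem ContDiffOn.hasDerivAt_of_mem_Ioo (hγ : ContDiffOn ℝ 1 γ (Icc a b)) {x : ℝ}
    (hx : x ∈ Ioo a b) : HasDerivAt γ (deriv γ x) x :=
  ((hγ.differentiableOn one_ne_zero x (Ioo_subset_Icc_self hx)).differentiableAt
    (Icc_mem_nhds hx.1 hx.2)).hasDerivAt

theorem ContDiffOn.integrableOn_comp_mul_deriv (hab : a < b) (hγ : ContDiffOn ℝ 1 γ (Icc a b))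
    (hg : Continuous g) : IntegrableOn (fun x ↦ g (γ x) * deriv γ x) (Icc a b) := by
  have hcont : ContinuousOn (fun x ↦ g (γ x) * derivWithin γ (Icc a b) x) (Icc a b) :=
    (hg.comp_continuousOn hγ.continuousOn).mul
      (hγ.continuousOn_derivWithin (uniqueDiffOn_Icc hab) le_rfl)
  rw [integrableOn_Icc_iff_integrableOn_Ioo]
  refine (hcont.integrableOn_Icc.mono_set Ioo_subset_Icc_self).congr_fun (fun x hx ↦ ?_)
    measurableSet_Ioo
  simp only [derivWithin_of_mem_nhds (Icc_mem_nhds hx.1 hx.2)]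

theorem ContDiffOn.integral_comp_mul_deriv (hab : a < b) (hγ : ContDiffOn ℝ 1 γ (Icc a b))
    (hg : Continuous g) : ∫ x in a..b, g (γ x) * deriv γ x = ∫ y in γ a..γ b, g y := by
  have hI : uIcc a b = Icc a b := uIcc_of_le hab.le
  have hγc : ContinuousOn γ (uIcc a b) := hI ▸ hγ.continuousOn
  refine integral_comp_mul_deriv''' hγc (fun x hx ↦ ?_) hg.continuousOn
    (hg.continuousOn.integrableOn_compact (isCompact_uIcc.image_of_continuousOn hγc))
    (hI ▸ hγ.integrableOn_comp_mul_deriv hab hg)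
  rw [min_eq_left hab.le, max_eq_right hab.le] at hx
  exact (hγ.hasDerivAt_of_mem_Ioo hx).hasDerivWithinAt

theorem PiecewiseC1R.exists_nat_partition {γ : ℝ → ℝ} (hγ : PiecewiseC1R γ) :
    ∃ (n : ℕ) (u : ℕ → ℝ), u 0 = 0 ∧ u n = 1 ∧
      ∀ k < n, u k < u (k + 1) ∧ ContDiffOn ℝ 1 γ (Icc (u k) (u (k + 1))) := by
  obtain ⟨-, n, t, hmono, ht0, htn, hpiece⟩ := hγ
  refine ⟨n, fun k ↦ t ⟨min k n, Nat.lt_succ_of_le (min_le_right _ _)⟩, ?_, ?_, fun k hk ↦ ?_⟩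
  · simpa using ht0
  · simpa [Fin.last] using htn
  · have hk' : k + 1 ≤ n := hk
    have hcast : (⟨min k n, Nat.lt_succ_of_le (min_le_right _ _)⟩ : Fin (n + 1))
        = (⟨k, hk⟩ : Fin n).castSucc := by ext; simp [hk.le]
    have hsucc : (⟨min (k + 1) n, Nat.lt_succ_of_le (min_le_right _ _)⟩ : Fin (n + 1))
        = (⟨k, hk⟩ : Fin n).succ := by ext; simp [hk']
    simp only [hcast, hsucc]
    exact ⟨hmono Fin.castSucc_lt_succ, hpiece ⟨k, hk⟩⟩

theorem PiecewiseC1R.integral_comp_mul_deriv (hγ : PiecewiseC1R γ) (hg : Continuous g) :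
    ∫ t in (0:ℝ)..1, g (γ t) * deriv γ t = ∫ y in γ 0..γ 1, g y := by
  obtain ⟨n, u, hu0, hun, hpiece⟩ := hγ.exists_nat_partition
  have hint : ∀ k < n, IntervalIntegrable (fun t ↦ g (γ t) * deriv γ t) volume (u k) (u (k + 1)) :=
    fun k hk ↦ (intervalIntegrable_iff_integrableOn_Icc_of_le (hpiece k hk).1.le).2 <|
      (hpiece k hk).2.integrableOn_comp_mul_deriv (hpiece k hk).1 hg
  rw [← hu0, ← hun, ← sum_integral_adjacent_intervals hint,
    ← sum_integral_adjacent_intervals (a := fun k ↦ γ (u k)) fun _ _ ↦ hg.intervalIntegrable _ _]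
  refine Finset.sum_congr rfl fun k hk ↦ ?_
  obtain ⟨hlt, hC1⟩ := hpiece k (Finset.mem_range.1 hk)
  exact hC1.integral_comp_mul_deriv hlt hg

theorem PiecewiseC1R.abs_integral_le_integral_mul_abs_deriv (hγ : PiecewiseC1R γ)
    (hg : Continuous g) (hg0 : ∀ y, 0 ≤ g y) :
    |∫ y in γ 0..γ 1, g y| ≤ ∫ t in (0:ℝ)..1, g (γ t) * |deriv γ t| := by
  rw [← hγ.integral_comp_mul_deriv hg]
  calc |∫ t in (0:ℝ)..1, g (γ t) * deriv γ t| ≤ ∫ t in (0:ℝ)..1, |g (γ t) * deriv γ t| :=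
        abs_integral_le_integral_abs zero_le_one
    _ = ∫ t in (0:ℝ)..1, g (γ t) * |deriv γ t| := by simp only [abs_mul, abs_of_nonneg (hg0 _)]

end ChangeOfVariables

-- `√V` for the double-well potential `V(y) = min(|y - L/2|^s, |y + L/2|^s)`.
noncomputable def sqrtDoubleWell (s L y : ℝ) : ℝ := (min |y - L / 2| |y + L / 2|) ^ (s / 2)

section DoubleWell

variable {s L : ℝ}

theorem sqrtDoubleWell_nonneg (s L y : ℝ) : 0 ≤ sqrtDoubleWell s L y :=
  Real.rpow_nonneg (le_min (abs_nonneg _) (abs_nonneg _)) _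

theorem continuous_sqrtDoubleWell (hs : 0 ≤ s) (L : ℝ) : Continuous (sqrtDoubleWell s L) :=
  ((continuous_sub_right _).abs.min (continuous_add_const _).abs).rpow_const
    fun _ ↦ Or.inr (by positivity)

theorem sqrtDoubleWell_neg (s L y : ℝ) : sqrtDoubleWell s L (-y) = sqrtDoubleWell s L y := by
  rw [sqrtDoubleWell, sqrtDoubleWell, min_comm, ← abs_neg (-y - L / 2), ← abs_neg (-y + L / 2)]
  ring_nf

theorem sqrtDoubleWell_of_mem_Icc {y : ℝ} (hy : y ∈ Icc (-(L / 2)) 0) :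
    sqrtDoubleWell s L y = (y + L / 2) ^ (s / 2) := by
  rw [sqrtDoubleWell, abs_of_nonneg (by linarith [hy.1] : 0 ≤ y + L / 2),
    min_eq_right (by linarith [hy.2, neg_le_abs (y - L / 2)])]

theorem integral_sqrtDoubleWell_of_mem_Icc (hs : 0 ≤ s) {c : ℝ} (hc : c ∈ Icc (-(L / 2)) 0) :
    ∫ y in c..0, sqrtDoubleWell s L y =
      ((L / 2) ^ (1 + s / 2) - (c + L / 2) ^ (1 + s / 2)) / (1 + s / 2) := by
  have hEq : EqOn (sqrtDoubleWell s L) (fun y ↦ (y + L / 2) ^ (s / 2)) (uIcc c 0) := fun y hy ↦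
    sqrtDoubleWell_of_mem_Icc ⟨hc.1.trans (uIcc_of_le hc.2 ▸ hy).1, (uIcc_of_le hc.2 ▸ hy).2⟩
  rw [integral_congr hEq, integral_comp_add_right (fun y ↦ y ^ (s / 2)),
    integral_rpow (Or.inl (by linarith)), zero_add, add_comm (s / 2)]

theorem integral_sqrtDoubleWell_zero_half (hs : 0 ≤ s) (hL : 0 ≤ L) :
    ∫ y in (0:ℝ)..L / 2, sqrtDoubleWell s L y = (L / 2) ^ (1 + s / 2) / (1 + s / 2) := by
  have h := integral_sqrtDoubleWell_of_mem_Icc hs (L := L) ⟨le_rfl, by linarith⟩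
  rw [neg_add_cancel, Real.zero_rpow (by linarith), sub_zero] at h
  rw [← h]
  simpa only [sqrtDoubleWell_neg, neg_zero] using
    integral_comp_neg (a := 0) (b := L / 2) (sqrtDoubleWell s L)

theorem le_integral_sqrtDoubleWell (hs : 0 ≤ s) (hL : 0 ≤ L) {x : ℝ} (hx : x ≤ 0) :
    2 * ((L / 2) ^ (1 + s / 2) / (1 + s / 2)) - |L / 2 + x| ^ (1 + s / 2) / (1 + s / 2) ≤
      ∫ y in x..L / 2, sqrtDoubleWell s L y := by
  set c := max x (-(L / 2))
  have hc : c ∈ Icc (-(L / 2)) 0 := ⟨le_max_right _ _, max_le hx (by linarith)⟩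
  have hint : ∀ a b, IntervalIntegrable (sqrtDoubleWell s L) volume a b :=
    (continuous_sqrtDoubleWell hs L).intervalIntegrable
  have hsplit : ∫ y in c..L / 2, sqrtDoubleWell s L y =
      (∫ y in c..0, sqrtDoubleWell s L y) + ∫ y in (0:ℝ)..L / 2, sqrtDoubleWell s L y :=
    (integral_add_adjacent_intervals (hint _ _) (hint _ _)).symm
  have hmono : ∫ y in c..L / 2, sqrtDoubleWell s L y ≤ ∫ y in x..L / 2, sqrtDoubleWell s L y :=
    integral_mono_interval (le_max_left _ _) (by linarith [hc.2]) le_rfl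
      (Filter.Eventually.of_forall (sqrtDoubleWell_nonneg s L)) (hint _ _)
  have hpow : (c + L / 2) ^ (1 + s / 2) ≤ |L / 2 + x| ^ (1 + s / 2) := by
    refine Real.rpow_le_rpow (by linarith [hc.1]) ?_ (by linarith)
    rw [show c + L / 2 = max (x + L / 2) (-(L / 2) + L / 2) from (max_add_add_right ..).symm,
      neg_add_cancel, add_comm]
    exact max_le (le_abs_self _) (abs_nonneg _)
  have hA : (c + L / 2) ^ (1 + s / 2) / (1 + s / 2) ≤ |L / 2 + x| ^ (1 + s / 2) / (1 + s / 2) :=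
    div_le_div_of_nonneg_right hpow (by linarith)
  rw [hsplit, integral_sqrtDoubleWell_of_mem_Icc hs hc, integral_sqrtDoubleWell_zero_half hs hL,
    sub_div] at hmono
  linarith

end DoubleWell

/-- For a piecewise C¹ curve from `L/2` to `x₁ ≤ 0`,
`2A(L/2) − A(|L/2 + x₁|) ≤ ∫₀¹ min(|γ̃(t) − L/2|, |γ̃(t) + L/2|)^{s/2} |γ̃'(t)| dt`,
with `A(r) = r^{1+s/2}/(1+s/2)`. -/
theorem stmt_6 (s L x₁ : ℝ) (hs : 2 ≤ s) (hL : 0 < L) (hx : x₁ ≤ 0)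
    (γ : ℝ → ℝ) (hγ : PiecewiseC1R γ) (h0 : γ 0 = L / 2) (h1 : γ 1 = x₁) :
    2 * ((L / 2) ^ (1 + s / 2) / (1 + s / 2)) - |L / 2 + x₁| ^ (1 + s / 2) / (1 + s / 2) ≤
      ∫ t in (0:ℝ)..1, (min |γ t - L / 2| |γ t + L / 2|) ^ (s / 2) * |deriv γ t| := by
  have hs₀ : 0 ≤ s := by linarith
  calc _ ≤ ∫ y in x₁..L / 2, sqrtDoubleWell s L y := le_integral_sqrtDoubleWell hs₀ hL.le hx
    _ = -∫ y in γ 0..γ 1, sqrtDoubleWell s L y := by rw [h0, h1, integral_symm]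
    _ ≤ |∫ y in γ 0..γ 1, sqrtDoubleWell s L y| := neg_le_abs _
    _ ≤ _ := hγ.abs_integral_le_integral_mul_abs_deriv (continuous_sqrtDoubleWell hs₀ L)
      (sqrtDoubleWell_nonneg s L)
end

section
/- Let f(x) = e^{−(1+s/2)^{-1}|x−a|^{1+s/2}} |x−a|^{−β} on ℝ^d for x ≠ a. Then for x ≠ a, Δf(x) = [ |x−a|^s + (2β − s/2 − d + 1)|x−a|^{s/2 − 1} + (β² + 2β − dβ)|x−a|^{−2} ] f(x). -/
/-!
For a radial function `g (‖y - a‖)` the first partial derivatives are `g'(r) / r * (y i - a i)`;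
differentiating once more and summing over `i` gives `Δ = g'' + (d - 1) / r * g'`.
The profile `g r = exp (-(1 + s/2)⁻¹ r ^ (1 + s/2)) * r ^ (-β)` satisfies `g' = ψ g` with
`ψ r = -r ^ (s/2) - β / r`, so `g'' = (ψ' + ψ ^ 2) g` and the bracket of the theorem is
`ψ' + ψ ^ 2 + (d - 1) / r * ψ`.
-/

/-- The Laplacian of `f : ℝ^d → ℝ`, as the sum of second partial derivatives along the
coordinate directions. -/
noncomputable def lapl {d : ℕ} (f : EuclideanSpace ℝ (Fin d) → ℝ)
    (x : EuclideanSpace ℝ (Fin d)) : ℝ :=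
  ∑ i : Fin d, fderiv ℝ (fun y => fderiv ℝ f y (EuclideanSpace.single i 1)) x
      (EuclideanSpace.single i 1)

open scoped RealInnerProductSpace
open Filter Topology

section Radial

variable {E : Type*} [NormedAddCommGroup E] [InnerProductSpace ℝ E] {a y : E}

theorem hasFDerivAt_norm_sub (hy : y ≠ a) :
    HasFDerivAt (fun z => ‖z - a‖) (‖y - a‖⁻¹ • innerSL ℝ (y - a)) y := by
  have hr : ‖y - a‖ ≠ 0 := norm_ne_zero_iff.mpr (sub_ne_zero.mpr hy)
  have h := ((hasFDerivAt_id y).sub_const a).norm_sq.sqrt (pow_ne_zero 2 hr)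
  simp only [id, ContinuousLinearMap.comp_id, Real.sqrt_sq (norm_nonneg _)] at h
  refine h.congr_fderiv ?_
  rw [← Nat.cast_smul_eq_nsmul ℝ, smul_smul]
  congr 1
  field_simp
  norm_num

theorem HasDerivAt.hasFDerivAt_comp_norm_sub {g : ℝ → ℝ} {g' : ℝ}
    (hg : HasDerivAt g g' ‖y - a‖) (hy : y ≠ a) :
    HasFDerivAt (fun z => g ‖z - a‖) ((g' / ‖y - a‖) • innerSL ℝ (y - a)) y := by
  refine (hg.comp_hasFDerivAt y (hasFDerivAt_norm_sub hy)).congr_fderiv ?_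
  rw [smul_smul, div_eq_mul_inv]

theorem HasDerivAt.fderiv_comp_norm_sub_mul_inner_apply {h : ℝ → ℝ} {h' : ℝ}
    (hh : HasDerivAt h h' ‖y - a‖) (hy : y ≠ a) (e : E) :
    fderiv ℝ (fun z => h ‖z - a‖ * ⟪z - a, e⟫) y e
      = h' / ‖y - a‖ * ⟪y - a, e⟫ ^ 2 + h ‖y - a‖ * ‖e‖ ^ 2 := by
  have hinner : HasFDerivAt (fun z => ⟪z - a, e⟫) (innerSL ℝ e) y := by
    refine (((hasFDerivAt_id y).sub_const a).inner ℝ (hasFDerivAt_const e y)).congr_fderiv ?_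
    ext v
    simp [real_inner_comm]
  rw [((hh.hasFDerivAt_comp_norm_sub hy).fun_mul hinner).fderiv]
  simp only [add_apply, smul_apply, coe_innerSL_apply, smul_eq_mul, real_inner_self_eq_norm_sq]
  ring

end Radial

theorem lapl_comp_norm_sub {d : ℕ} {g g' : ℝ → ℝ} {g'' : ℝ} {a x : EuclideanSpace ℝ (Fin d)}
    (hx : x ≠ a) (hg : ∀ᶠ t in 𝓝 ‖x - a‖, HasDerivAt g (g' t) t)
    (hg' : HasDerivAt g' g'' ‖x - a‖) :
    lapl (fun y => g ‖y - a‖) x = g'' + (d - 1) / ‖x - a‖ * g' ‖x - a‖ := by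
  set r := ‖x - a‖
  have hr : 0 < r := norm_pos_iff.mpr (sub_ne_zero.mpr hx)
  set h : ℝ → ℝ := fun t => g' t / t
  have hh : HasDerivAt h ((g'' * r - g' r) / r ^ 2) r :=
    (hg'.fun_div (hasDerivAt_id' r) hr.ne').congr_deriv (by ring)
  have hpartial : ∀ i : Fin d, (fun y => fderiv ℝ (fun z => g ‖z - a‖) y (EuclideanSpace.single i 1))
      =ᶠ[𝓝 x] fun y => h ‖y - a‖ * ⟪y - a, EuclideanSpace.single i 1⟫ := by
    intro i
    filter_upwards [eventually_ne_nhds hx,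
      ((continuous_sub_right a).norm.tendsto x).eventually hg] with y hy hgy
    rw [(hgy.hasFDerivAt_comp_norm_sub hy).fderiv]
    rfl
  calc lapl (fun y => g ‖y - a‖) x
      = ∑ i : Fin d, ((g'' * r - g' r) / r ^ 2 / r * ⟪x - a, EuclideanSpace.single i 1⟫ ^ 2
          + h r * ‖(EuclideanSpace.single i 1 : EuclideanSpace ℝ (Fin d))‖ ^ 2) := by
        refine Finset.sum_congr rfl fun i _ => ?_
        rw [(hpartial i).fderiv_eq, hh.fderiv_comp_norm_sub_mul_inner_apply hx]
    _ = (g'' * r - g' r) / r ^ 2 / r * r ^ 2 + d * h r := by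
        have hsum : ∑ i : Fin d, ⟪x - a, EuclideanSpace.single i 1⟫ ^ 2 = r ^ 2 := by
          simpa using (EuclideanSpace.basisFun (Fin d) ℝ).sum_sq_inner_left (x - a)
        simp [Finset.sum_add_distrib, ← Finset.mul_sum, hsum]
    _ = g'' + (d - 1) / r * g' r := by
        simp only [h]
        field_simp
        ring

noncomputable def radialProfile (s β t : ℝ) : ℝ :=
  Real.exp (-(1 + s / 2)⁻¹ * t ^ (1 + s / 2)) * t ^ (-β)

section Profile

variable {s β t : ℝ}

theorem hasDerivAt_radialProfile (hs : 1 + s / 2 ≠ 0) (ht : 0 < t) :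
    HasDerivAt (radialProfile s β) ((-t ^ (s / 2) - β / t) * radialProfile s β t) t := by
  have hexp := ((Real.hasDerivAt_rpow_const (p := 1 + s / 2) (Or.inl ht.ne')).const_mul
    (-(1 + s / 2)⁻¹)).exp
  have hpow := Real.hasDerivAt_rpow_const (p := -β) (Or.inl ht.ne')
  refine (hexp.mul hpow).congr_deriv ?_
  rw [radialProfile, show 1 + s / 2 - 1 = s / 2 by ring, Real.rpow_sub_one ht.ne']
  simp only [neg_mul, inv_mul_cancel_left₀ hs]
  field_simp
  ring

theorem hasDerivAt_neg_rpow_sub_div (ht : 0 < t) :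
    HasDerivAt (fun t => -t ^ (s / 2) - β / t) (-(s / 2 * t ^ (s / 2 - 1)) + β / t ^ 2) t := by
  refine ((Real.hasDerivAt_rpow_const (Or.inl ht.ne')).neg.sub
    ((hasDerivAt_inv ht.ne').const_mul β)).congr_deriv ?_
  ring

end Profile

theorem stmt_7_general {d : ℕ} (s β : ℝ) (hs : 2 ≤ s)
    (a x : EuclideanSpace ℝ (Fin d)) (hx : x ≠ a) :
    lapl (fun y => Real.exp (-(1 + s / 2)⁻¹ * ‖y - a‖ ^ (1 + s / 2)) * ‖y - a‖ ^ (-β)) x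
      = (‖x - a‖ ^ s + (2 * β - s / 2 - (d : ℝ) + 1) * ‖x - a‖ ^ (s / 2 - 1)
          + (β ^ 2 + 2 * β - (d : ℝ) * β) * ‖x - a‖ ^ (-2 : ℝ))
        * (Real.exp (-(1 + s / 2)⁻¹ * ‖x - a‖ ^ (1 + s / 2)) * ‖x - a‖ ^ (-β)) := by
  have hs' : 1 + s / 2 ≠ 0 := by linarith
  have hr : 0 < ‖x - a‖ := norm_pos_iff.mpr (sub_ne_zero.mpr hx)
  have hg : ∀ᶠ t in 𝓝 ‖x - a‖, HasDerivAt (radialProfile s β)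
      ((-t ^ (s / 2) - β / t) * radialProfile s β t) t :=
    (lt_mem_nhds hr).mono fun t ht => hasDerivAt_radialProfile hs' ht
  have hg' := (hasDerivAt_neg_rpow_sub_div (s := s) (β := β) hr).mul
    (hasDerivAt_radialProfile (β := β) hs' hr)
  refine (lapl_comp_norm_sub (g := radialProfile s β) hx hg hg').trans ?_
  set r := ‖x - a‖
  have hsplit : r ^ s = r ^ (s / 2) * r ^ (s / 2) := by rw [← Real.rpow_add hr, add_halves]
  rw [hsplit, Real.rpow_sub_one hr.ne', Real.rpow_neg hr.le, Real.rpow_two]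
  unfold radialProfile
  generalize r ^ (s / 2) = X
  field_simp
  ring

/-- For `f(x) = e^{−(1+s/2)⁻¹|x−a|^{1+s/2}} |x−a|^{−β}` and `x ≠ a`,
`Δf(x) = [ |x−a|^s + (2β − s/2 − d + 1)|x−a|^{s/2−1} + (β² + 2β − dβ)|x−a|^{−2} ] f(x)`. -/
theorem stmt_7 {d : ℕ} (hd : 1 ≤ d) (s β : ℝ) (hs : 2 ≤ s)
    (a x : EuclideanSpace ℝ (Fin d)) (hx : x ≠ a) :
    lapl (fun y => Real.exp (-(1 + s / 2)⁻¹ * ‖y - a‖ ^ (1 + s / 2)) * ‖y - a‖ ^ (-β)) x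
      = (‖x - a‖ ^ s + (2 * β - s / 2 - (d : ℝ) + 1) * ‖x - a‖ ^ (s / 2 - 1)
          + (β ^ 2 + 2 * β - (d : ℝ) * β) * ‖x - a‖ ^ (-2 : ℝ))
        * (Real.exp (-(1 + s / 2)⁻¹ * ‖x - a‖ ^ (1 + s / 2)) * ‖x - a‖ ^ (-β)) :=
  stmt_7_general s β hs a x hx
end

section
/- Let W : ℝ^d → ℝ be C¹ with W ≥ 0 and W² − |∇W|² ≥ −C for some constant C ≥ 0. Then for every ψ ∈ C_c^∞(ℝ^d), (1/2)‖Δψ‖²_{L²} ≤ ‖(−Δ + W)ψ‖²_{L²} + (C + 2)‖ψ‖²_{L²}. -/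
open MeasureTheory

lemma grad_norm_sq_aux {d : ℕ} (W : EuclideanSpace ℝ (Fin d) → ℝ)
    (x : EuclideanSpace ℝ (Fin d)) :
    ‖gradient W x‖ ^ 2 = ∑ i : Fin d, (fderiv ℝ W x (EuclideanSpace.single i 1)) ^ 2 := by
  have h : ∀ i : Fin d, fderiv ℝ W x (EuclideanSpace.single i 1) = gradient W x i := by
    intro i
    rw [gradient]
    have := InnerProductSpace.toDual_symm_apply (𝕜 := ℝ) (E := EuclideanSpace ℝ (Fin d))
      (x := EuclideanSpace.single i 1) (y := fderiv ℝ W x)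
    rw [← this, real_inner_comm, EuclideanSpace.inner_single_left]
    simp
  simp_rw [h]
  rw [EuclideanSpace.norm_eq, Real.sq_sqrt (by positivity)]
  simp [sq_abs]

/-- If `W ≥ 0` is C¹ with `W² − |∇W|² ≥ −C`, then for every `ψ ∈ C_c^∞(ℝ^d)`:
`(1/2)‖Δψ‖² ≤ ‖(−Δ + W)ψ‖² + (C + 2)‖ψ‖²`. -/
theorem stmt_14 {d : ℕ} (W : EuclideanSpace ℝ (Fin d) → ℝ) (C : ℝ) (hC : 0 ≤ C)
    (hW : ContDiff ℝ 1 W) (hW0 : ∀ x, 0 ≤ W x)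
    (hWb : ∀ x, -C ≤ W x ^ 2 - ‖gradient W x‖ ^ 2)
    (ψ : EuclideanSpace ℝ (Fin d) → ℝ) (hψ : ContDiff ℝ (⊤ : ℕ∞) ψ) (hcs : HasCompactSupport ψ) :
    (1 / 2) * ∫ x, (lapl ψ x) ^ 2 ≤
      (∫ x, (-lapl ψ x + W x * ψ x) ^ 2) + (C + 2) * ∫ x, ψ x ^ 2 := by
  classical

  set e : Fin d → EuclideanSpace ℝ (Fin d) := fun i => EuclideanSpace.single i 1 with he
  set u : Fin d → EuclideanSpace ℝ (Fin d) → ℝ := fun i x => fderiv ℝ ψ x (e i) with hu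
  set b : Fin d → EuclideanSpace ℝ (Fin d) → ℝ := fun i x => fderiv ℝ W x (e i) with hb
  have hψd : Differentiable ℝ ψ := hψ.differentiable (by simp)
  have hWd : Differentiable ℝ W := hW.differentiable (by simp)
  have hψc : Continuous ψ := hψ.continuous
  have hWc : Continuous W := hW.continuous
  have hui : ∀ i, ContDiff ℝ (⊤ : ℕ∞) (u i) := fun i =>
    (hψ.fderiv_right (m := (⊤ : ℕ∞)) (by simp)).clm_apply contDiff_const
  have huic : ∀ i, Continuous (u i) := fun i => (hui i).continuous
  have huid : ∀ i, Differentiable ℝ (u i) := fun i => (hui i).differentiable (by simp)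
  have hbc : ∀ i, Continuous (b i) := fun i =>
    ((hW.fderiv_right (m := 0) le_rfl).clm_apply contDiff_const).continuous
  have hvc : ∀ i, Continuous (fun x => fderiv ℝ (u i) x (e i)) := fun i =>
    (((hui i).fderiv_right (m := (⊤ : ℕ∞)) (by simp)).clm_apply contDiff_const).continuous
  have hlapl : ∀ x, lapl ψ x = ∑ i : Fin d, fderiv ℝ (u i) x (e i) := fun x => rfl
  have hLc : Continuous (lapl ψ) := by
    have : Continuous (fun x => ∑ i : Fin d, fderiv ℝ (u i) x (e i)) :=
      continuous_finset_sum _ (fun i _ => hvc i)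
    exact this.congr (fun x => (hlapl x).symm)
  -- vanishing off tsupport ψ
  have hψ0 : ∀ x, x ∉ tsupport ψ → ψ x = 0 := fun x hx => image_eq_zero_of_notMem_tsupport hx
  have hu0 : ∀ i x, x ∉ tsupport ψ → u i x = 0 := by
    intro i x hx
    have : fderiv ℝ ψ x = 0 := by
      by_contra h
      exact hx (support_fderiv_subset ℝ h)
    simp [hu, this]
  have hsupp_u : ∀ i, tsupport (u i) ⊆ tsupport ψ := by
    intro i
    apply closure_minimal ?_ isClosed_closure
    intro x hx
    by_contra h
    exact hx (hu0 i x h)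
  have hv0 : ∀ i x, x ∉ tsupport ψ → fderiv ℝ (u i) x (e i) = 0 := by
    intro i x hx
    have : fderiv ℝ (u i) x = 0 := by
      by_contra h
      exact hx (hsupp_u i (support_fderiv_subset ℝ h))
    simp [this]
  have hL0 : ∀ x, x ∉ tsupport ψ → lapl ψ x = 0 := by
    intro x hx
    rw [hlapl]
    exact Finset.sum_eq_zero (fun i _ => hv0 i x hx)
  -- integrability helper
  have key : ∀ f : EuclideanSpace ℝ (Fin d) → ℝ, Continuous f → (∀ x, x ∉ tsupport ψ → f x = 0) → Integrable f := by
    intro f hf h0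
    refine hf.integrable_of_hasCompactSupport (hcs.mono' ?_)
    intro x hx
    by_contra hxx
    exact hx (h0 x hxx)
  -- the derivative of W * ψ
  have hWψd : Differentiable ℝ (fun y => W y * ψ y) := hWd.mul hψd
  have hfderivWψ : ∀ i x, fderiv ℝ (fun y => W y * ψ y) x (e i)
      = W x * u i x + ψ x * b i x := by
    intro i x
    rw [fderiv_fun_mul (hWd x) (hψd x)]
    simp [hu, hb]
    try ring
  -- integration by parts, first: ∫ ψ * ∂ᵢ(u i) = - ∫ u i * u i
  have ibp1 : ∀ i : Fin d, ∫ x, ψ x * fderiv ℝ (u i) x (e i) = - ∫ x, u i x ^ 2 := by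
    intro i
    have h1 : Integrable (fun x => fderiv ℝ ψ x (e i) * u i x) := by
      refine key _ ((huic i).mul (huic i)) (fun x hx => ?_)
      simp [hu0 i x hx]
    have h2 : Integrable (fun x => ψ x * fderiv ℝ (u i) x (e i)) := by
      refine key _ (hψc.mul (hvc i)) (fun x hx => ?_)
      simp [hψ0 x hx]
    have h3 : Integrable (fun x => ψ x * u i x) := by
      refine key _ (hψc.mul (huic i)) (fun x hx => ?_)
      simp [hψ0 x hx]
    rw [integral_mul_fderiv_eq_neg_fderiv_mul_of_integrable h1 h2 h3 (fun x _ => hψd x) (fun x _ => huid i x)]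
    congr 1
    apply integral_congr_ae
    filter_upwards with x
    rw [sq]
  -- integration by parts, second: ∫ (Wψ) * ∂ᵢ(u i) = - ∫ (W uᵢ + ψ bᵢ) uᵢ
  have ibp2 : ∀ i : Fin d, ∫ x, (W x * ψ x) * fderiv ℝ (u i) x (e i)
      = - ∫ x, (W x * u i x + ψ x * b i x) * u i x := by
    intro i
    have heq : (fun x => fderiv ℝ (fun y => W y * ψ y) x (e i) * u i x)
        = fun x => (W x * u i x + ψ x * b i x) * u i x := by
      funext x; rw [hfderivWψ i x]
    have h1 : Integrable (fun x => fderiv ℝ (fun y => W y * ψ y) x (e i) * u i x) := by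
      rw [heq]
      refine key _ (((hWc.mul (huic i)).add (hψc.mul (hbc i))).mul (huic i)) (fun x hx => ?_)
      simp [hu0 i x hx]
    have h2 : Integrable (fun x => (W x * ψ x) * fderiv ℝ (u i) x (e i)) := by
      refine key _ ((hWc.mul hψc).mul (hvc i)) (fun x hx => ?_)
      simp [hψ0 x hx]
    have h3 : Integrable (fun x => (W x * ψ x) * u i x) := by
      refine key _ ((hWc.mul hψc).mul (huic i)) (fun x hx => ?_)
      simp [hψ0 x hx]
    rw [integral_mul_fderiv_eq_neg_fderiv_mul_of_integrable h1 h2 h3 (fun x _ => hWψd x) (fun x _ => huid i x)]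
    rw [heq]
  -- integrability of the various groups
  have hS2c : Continuous (fun x => ∑ i : Fin d, u i x ^ 2) :=
    continuous_finset_sum _ (fun i _ => (huic i).pow 2)
  have intS2 : Integrable (fun x => ∑ i : Fin d, u i x ^ 2) := by
    refine key _ hS2c (fun x hx => Finset.sum_eq_zero (fun i _ => by simp [hu0 i x hx]))
  have intψL : Integrable (fun x => ψ x * lapl ψ x) := by
    refine key _ (hψc.mul hLc) (fun x hx => by simp [hψ0 x hx])
  have hSbuc : Continuous (fun x => ∑ i : Fin d, b i x * u i x) :=
    continuous_finset_sum _ (fun i _ => (hbc i).mul (huic i))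
  have intψSbu : Integrable (fun x => ψ x * ∑ i : Fin d, b i x * u i x) := by
    refine key _ (hψc.mul hSbuc) (fun x hx => by simp [hψ0 x hx])
  have intWS2 : Integrable (fun x => W x * ∑ i : Fin d, u i x ^ 2) := by
    refine key _ (hWc.mul hS2c)
      (fun x hx => by simp [Finset.sum_eq_zero (fun i (_ : i ∈ Finset.univ) => by simp [hu0 i x hx] : ∀ i ∈ Finset.univ, u i x ^ 2 = 0)])
  have intWψL : Integrable (fun x => (W x * ψ x) * lapl ψ x) := by
    refine key _ ((hWc.mul hψc).mul hLc) (fun x hx => by simp [hψ0 x hx])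
  have intψ2 : Integrable (fun x => ψ x ^ 2) := by
    refine key _ (hψc.pow 2) (fun x hx => by simp [hψ0 x hx])
  have intL2 : Integrable (fun x => lapl ψ x ^ 2) := by
    refine key _ (hLc.pow 2) (fun x hx => by simp [hL0 x hx])
  have intMain : Integrable (fun x => (-lapl ψ x + W x * ψ x) ^ 2) := by
    refine key _ (((hLc.neg).add (hWc.mul hψc)).pow 2) (fun x hx => by
      simp [hψ0 x hx, hL0 x hx])
  -- ∫ G = 0
  have hG : ∫ x, ((∑ i : Fin d, u i x ^ 2) + ψ x * lapl ψ x) = 0 := by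
    rw [integral_add intS2 intψL]
    have h1 : ∫ x, ψ x * lapl ψ x = ∑ i : Fin d, ∫ x, ψ x * fderiv ℝ (u i) x (e i) := by
      rw [← integral_finset_sum]
      · apply integral_congr_ae
        filter_upwards with x
        rw [hlapl, Finset.mul_sum]
      · intro i _
        refine key _ (hψc.mul (hvc i)) (fun x hx => by simp [hψ0 x hx])
    have h2 : ∫ x, ∑ i : Fin d, u i x ^ 2 = ∑ i : Fin d, ∫ x, u i x ^ 2 := by
      apply integral_finset_sum
      intro i _
      refine key _ ((huic i).pow 2) (fun x hx => by simp [hu0 i x hx])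
    rw [h1, h2]
    simp_rw [ibp1]
    rw [Finset.sum_neg_distrib]
    ring
  -- ∫ H = 0
  have hH : ∫ x, ((ψ x * ∑ i : Fin d, b i x * u i x) + W x * (∑ i : Fin d, u i x ^ 2)
      + (W x * ψ x) * lapl ψ x) = 0 := by
    have hadd : ∫ x, ((ψ x * ∑ i : Fin d, b i x * u i x) + W x * (∑ i : Fin d, u i x ^ 2)
        + (W x * ψ x) * lapl ψ x)
        = (∫ x, ((ψ x * ∑ i : Fin d, b i x * u i x) + W x * (∑ i : Fin d, u i x ^ 2)))
          + ∫ x, (W x * ψ x) * lapl ψ x := integral_add (intψSbu.add intWS2) intWψL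
    rw [hadd]
    have h1 : ∫ x, (W x * ψ x) * lapl ψ x
        = ∑ i : Fin d, ∫ x, (W x * ψ x) * fderiv ℝ (u i) x (e i) := by
      rw [← integral_finset_sum]
      · apply integral_congr_ae
        filter_upwards with x
        rw [hlapl, Finset.mul_sum]
      · intro i _
        refine key _ ((hWc.mul hψc).mul (hvc i)) (fun x hx => by simp [hψ0 x hx])
    have h2 : ∫ x, ((ψ x * ∑ i : Fin d, b i x * u i x) + W x * (∑ i : Fin d, u i x ^ 2))
        = ∑ i : Fin d, ∫ x, (W x * u i x + ψ x * b i x) * u i x := by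
      rw [← integral_finset_sum]
      · apply integral_congr_ae
        filter_upwards with x
        rw [Finset.mul_sum, Finset.mul_sum, ← Finset.sum_add_distrib]
        apply Finset.sum_congr rfl
        intro i _
        ring
      · intro i _
        refine key _ (((hWc.mul (huic i)).add (hψc.mul (hbc i))).mul (huic i))
          (fun x hx => by simp [hu0 i x hx])
    rw [h1, h2]
    simp_rw [ibp2]
    rw [Finset.sum_neg_distrib]
    ring
  -- pointwise nonnegativity of N
  set N : EuclideanSpace ℝ (Fin d) → ℝ := fun x => (-lapl ψ x + W x * ψ x) ^ 2 + (C + 2) * ψ x ^ 2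
      - (1 / 2) * lapl ψ x ^ 2
      + ((∑ i : Fin d, u i x ^ 2) + ψ x * lapl ψ x)
      + 2 * ((ψ x * ∑ i : Fin d, b i x * u i x) + W x * (∑ i : Fin d, u i x ^ 2)
        + (W x * ψ x) * lapl ψ x) with hN
  have hNpos : ∀ x, 0 ≤ N x := by
    intro x
    have hCS : 0 ≤ (∑ i : Fin d, u i x ^ 2) + 2 * ψ x * (∑ i : Fin d, b i x * u i x)
        + ψ x ^ 2 * (∑ i : Fin d, b i x ^ 2) := by
      have hexp : ∑ i : Fin d, (u i x + ψ x * b i x) ^ 2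
          = (∑ i : Fin d, u i x ^ 2) + 2 * ψ x * (∑ i : Fin d, b i x * u i x)
            + ψ x ^ 2 * (∑ i : Fin d, b i x ^ 2) := by
        rw [Finset.mul_sum, Finset.mul_sum, ← Finset.sum_add_distrib, ← Finset.sum_add_distrib]
        apply Finset.sum_congr rfl
        intro i _
        ring
      rw [← hexp]
      exact Finset.sum_nonneg (fun i _ => sq_nonneg _)
    have hb2 : ∑ i : Fin d, b i x ^ 2 ≤ W x ^ 2 + C := by
      have := hWb x
      have hnorm := grad_norm_sq_aux W x
      rw [hnorm] at this
      simp only [hb, he]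
      linarith
    have hS2 : 0 ≤ ∑ i : Fin d, u i x ^ 2 := Finset.sum_nonneg (fun i _ => sq_nonneg _)
    have hw : 0 ≤ W x := hW0 x
    have hprod : 0 ≤ ψ x ^ 2 * (W x ^ 2 + C - ∑ i : Fin d, b i x ^ 2) :=
      mul_nonneg (sq_nonneg _) (by linarith)
    have hws : 0 ≤ W x * ∑ i : Fin d, u i x ^ 2 := mul_nonneg hw hS2
    have hsq : 0 ≤ (lapl ψ x + ψ x) ^ 2 := sq_nonneg _
    have hp2 : 0 ≤ ψ x ^ 2 := sq_nonneg _
    rw [hN]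
    nlinarith [hCS, hprod, hws, hsq, hp2]
  -- ∫ N ≥ 0
  have hNint : ∫ x, N x = (∫ x, (-lapl ψ x + W x * ψ x) ^ 2)
      + (C + 2) * (∫ x, ψ x ^ 2) - (1 / 2) * (∫ x, lapl ψ x ^ 2) := by
    have i1 : Integrable (fun x => (-lapl ψ x + W x * ψ x) ^ 2 + (C + 2) * ψ x ^ 2) :=
      intMain.add (intψ2.const_mul _)
    have i2 : Integrable (fun x => (-lapl ψ x + W x * ψ x) ^ 2 + (C + 2) * ψ x ^ 2
        - (1 / 2) * lapl ψ x ^ 2) := i1.sub (intL2.const_mul _)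
    have i3 : Integrable (fun x => (∑ i : Fin d, u i x ^ 2) + ψ x * lapl ψ x) :=
      intS2.add intψL
    have i4 : Integrable (fun x => (-lapl ψ x + W x * ψ x) ^ 2 + (C + 2) * ψ x ^ 2
        - (1 / 2) * lapl ψ x ^ 2 + ((∑ i : Fin d, u i x ^ 2) + ψ x * lapl ψ x)) := i2.add i3
    have i5 : Integrable (fun x => (ψ x * ∑ i : Fin d, b i x * u i x)
        + W x * (∑ i : Fin d, u i x ^ 2) + (W x * ψ x) * lapl ψ x) :=
      (intψSbu.add intWS2).add intWψL
    rw [hN]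
    rw [integral_add i4 (i5.const_mul 2), integral_add i2 i3,
      integral_sub i1 (intL2.const_mul _), integral_add intMain (intψ2.const_mul _), hG]
    simp only [integral_const_mul]
    rw [hH]
    ring
  have h0 : 0 ≤ ∫ x, N x := integral_nonneg hNpos
  rw [hNint] at h0
  linarith
end
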